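/- Let σ > 0 and ρ ∈ (0, 1]. For ε > 0 set c := 1 − 2^{−2ε} and define V(ε) := inf { 2σ² − 2 ω₁ ρ σ² √c − 2 ω₂ σ² : (ω₁, ω₂) ∈ ℝ², ω₂² (1 − ρ² (1 − c) c) ≤ (1 − ω₁² − 2 ω₁ ω₂ ρ √c) · c, and ω₁ + √c · ρ · ω₂ = ρ }. Then there exist constants C > 0 and ε₀ > 0 such that for all ε ∈ (0, ε₀), |V(ε) − 2σ²(1 − (ρ² + √(1 − ρ²)) √(2 ε ln 2))| ≤ C ε. In particular for ρ = 1 the value satisfies V(ε) = 2σ²(1 − √(2 ε ln 2)) + O(ε), equal to the first-frame distortion — the permanence-of-error phenomenon of the joint-distribution perception loss. (V(ε) is the minimum second-frame distortion under zero joint-distribution perception loss at per-frame rate R₁ = R₂ = ε.) -/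

import Mathlib

/-!
On the cross-correlation line `ω₁ = ρ - √c ρ ω₂` the rate constraint becomes
`ω₂² (1 - ρ² c) ≤ c (1 - ρ²)` and the distortion `2σ²(1 - ρ²√c) - 2σ²(1 - ρ² c) ω₂` is decreasing
in `ω₂`, so the infimum is attained at the largest admissible `ω₂`:
`V = 2σ² (1 - √c (ρ² + √((1 - ρ²)(1 - ρ² c))))`.
With `t = 2ε ln 2` we have `c = 1 - e^{-t} ∈ [t - t², t]`, hence `√t - √c ≤ √(t - c) ≤ t` and
`1 - √(1 - ρ² c) ≤ t`, which gives the expansion with error at most `6σ² t ≤ 12σ² ε`.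
-/

open MeasureTheory

/-- `cRate ε = 1 − 2^{−2ε}`, the quantity `c` associated with rate `ε`. -/
noncomputable def cRate (ε : ℝ) : ℝ := 1 - (2 : ℝ) ^ (-(2 * ε))

open Real

theorem isLeast_distortion (σ ρ c : ℝ) (hc : 0 ≤ c) (hρ : ρ ^ 2 ≤ 1) (hρc : ρ ^ 2 * c < 1) :
    IsLeast { v : ℝ | ∃ ω₁ ω₂ : ℝ,
        ω₂ ^ 2 * (1 - ρ ^ 2 * (1 - c) * c) ≤ (1 - ω₁ ^ 2 - 2 * ω₁ * ω₂ * ρ * √c) * c ∧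
        ω₁ + √c * ρ * ω₂ = ρ ∧
        v = 2 * σ ^ 2 - 2 * ω₁ * ρ * σ ^ 2 * √c - 2 * ω₂ * σ ^ 2 }
      (2 * σ ^ 2 * (1 - √c * (ρ ^ 2 + √((1 - ρ ^ 2) * (1 - ρ ^ 2 * c))))) := by
  set D := 1 - ρ ^ 2 * c
  have hD : 0 < D := by simp only [D]; linarith
  have hsqrt_c : √c ^ 2 = c := sq_sqrt hc
  have slack (ω₂ : ℝ) :
      (1 - (ρ - √c * ρ * ω₂) ^ 2 - 2 * (ρ - √c * ρ * ω₂) * ω₂ * ρ * √c) * c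
        - ω₂ ^ 2 * (1 - ρ ^ 2 * (1 - c) * c) = c * (1 - ρ ^ 2) - ω₂ ^ 2 * D := by
    linear_combination c * ρ ^ 2 * ω₂ ^ 2 * hsqrt_c
  have distortion (ω₂ : ℝ) :
      2 * σ ^ 2 - 2 * (ρ - √c * ρ * ω₂) * ρ * σ ^ 2 * √c - 2 * ω₂ * σ ^ 2
        = 2 * σ ^ 2 * (1 - ρ ^ 2 * √c) - 2 * σ ^ 2 * (D * ω₂) := by
    linear_combination 2 * ρ ^ 2 * σ ^ 2 * ω₂ * hsqrt_c
  set s := √c * √((1 - ρ ^ 2) * D)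
  have hs_sq : s ^ 2 = c * (1 - ρ ^ 2) * D := by
    rw [mul_pow, hsqrt_c, sq_sqrt (by nlinarith)]; ring
  constructor
  · refine ⟨ρ - √c * ρ * (s / D), s / D, ?_, by ring, ?_⟩
    · have h := slack (s / D)
      have : (s / D) ^ 2 * D = c * (1 - ρ ^ 2) := by
        field_simp; linear_combination hs_sq
      linarith
    · rw [distortion, mul_div_cancel₀ _ hD.ne']; ring
  · rintro v ⟨ω₁, ω₂, hrate, hline, rfl⟩
    obtain rfl : ω₁ = ρ - √c * ρ * ω₂ := by linarith
    have hfeas : ω₂ ^ 2 * D ≤ c * (1 - ρ ^ 2) := by linarith [slack ω₂]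
    have hDω : D * ω₂ ≤ s := by
      have : (D * ω₂) ^ 2 ≤ s ^ 2 := by rw [hs_sq]; nlinarith
      exact (abs_le_of_sq_le_sq' this (by positivity)).2
    rw [distortion]
    nlinarith [mul_nonneg (sq_nonneg σ) (sub_nonneg.2 hDω)]

theorem sqrt_sub_sqrt_le_sqrt_sub {a b : ℝ} (ha : 0 ≤ a) (hab : a ≤ b) :
    √b - √a ≤ √(b - a) := by
  suffices √b ≤ √a + √(b - a) by linarith
  rw [sqrt_le_left (by positivity), add_sq, sq_sqrt ha, sq_sqrt (sub_nonneg.2 hab)]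
  nlinarith [sqrt_nonneg a, sqrt_nonneg (b - a)]

theorem one_sub_exp_neg_mem_Icc {t : ℝ} (ht₀ : 0 ≤ t) (ht₁ : t ≤ 1) :
    1 - exp (-t) ∈ Set.Icc (t - t ^ 2) t := by
  have h := abs_exp_sub_one_sub_id_le (x := -t) (by rw [abs_neg, abs_of_nonneg ht₀]; exact ht₁)
  constructor
  · rw [neg_sq] at h; linarith [(abs_le.1 h).2]
  · linarith [add_one_le_exp (-t)]

theorem cRate_eq (ε : ℝ) : cRate ε = 1 - exp (-(2 * ε * log 2)) := by
  rw [cRate, rpow_def_of_pos two_pos]; ring_nf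

theorem abs_distortion_sub_expansion_le (σ ρ c t : ℝ) (hρ : ρ ^ 2 ≤ 1) (hc : 0 ≤ c)
    (hct : c ∈ Set.Icc (t - t ^ 2) t) (ht₁ : t ≤ 1) :
    |2 * σ ^ 2 * (1 - √c * (ρ ^ 2 + √((1 - ρ ^ 2) * (1 - ρ ^ 2 * c))))
        - 2 * σ ^ 2 * (1 - (ρ ^ 2 + √(1 - ρ ^ 2)) * √t)| ≤ 6 * σ ^ 2 * t := by
  obtain ⟨htc, hct⟩ := hct
  have ht₀ : 0 ≤ t := hc.trans hct
  set D := 1 - ρ ^ 2 * c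
  have hD₀ : 0 ≤ D := by nlinarith
  have hD₁ : 1 - D ≤ t := by nlinarith
  have hsqrt_c : √c ≤ √t := sqrt_le_sqrt hct
  have hsqrt_c₁ : √c ≤ 1 := sqrt_le_one.2 (by linarith)
  have hsqrt_D : √D ≤ 1 := sqrt_le_one.2 (by nlinarith)
  have hD_le : D ≤ √D := le_sqrt_self_iff.2 (by nlinarith)
  have first : √t - √c ≤ t :=
    calc √t - √c ≤ √(t - c) := sqrt_sub_sqrt_le_sqrt_sub hc hct
      _ ≤ √(t ^ 2) := sqrt_le_sqrt (by linarith)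
      _ = t := sqrt_sq ht₀
  have second₀ : √c * √D ≤ √t := (mul_le_of_le_one_right (sqrt_nonneg c) hsqrt_D).trans hsqrt_c
  have second : √t - √c * √D ≤ 2 * t := by
    have : √c * (1 - √D) ≤ t := by nlinarith [sqrt_nonneg c]
    linarith
  have hq₀ : 0 ≤ √(1 - ρ ^ 2) := sqrt_nonneg _
  have hq₁ : √(1 - ρ ^ 2) ≤ 1 := sqrt_le_one.2 (by nlinarith)
  have expand : 2 * σ ^ 2 * (1 - √c * (ρ ^ 2 + √((1 - ρ ^ 2) * D)))
        - 2 * σ ^ 2 * (1 - (ρ ^ 2 + √(1 - ρ ^ 2)) * √t)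
      = 2 * σ ^ 2 * (ρ ^ 2 * (√t - √c) + √(1 - ρ ^ 2) * (√t - √c * √D)) := by
    rw [sqrt_mul (by linarith)]; ring
  have hgap₀ : 0 ≤ ρ ^ 2 * (√t - √c) + √(1 - ρ ^ 2) * (√t - √c * √D) := by
    have := sq_nonneg ρ
    have := mul_nonneg hq₀ (sub_nonneg.2 second₀)
    nlinarith
  have hgap₁ : ρ ^ 2 * (√t - √c) + √(1 - ρ ^ 2) * (√t - √c * √D) ≤ 3 * t := by
    have := mul_le_of_le_one_left (sub_nonneg.2 hsqrt_c) hρ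
    have := mul_le_of_le_one_left (sub_nonneg.2 second₀) hq₁
    linarith
  rw [expand, abs_of_nonneg (by positivity)]
  nlinarith [sq_nonneg σ]

theorem statement10 (σ ρ : ℝ) (hσ : 0 < σ) (hρ : ρ ∈ Set.Ioc (0 : ℝ) 1) :
    ∃ C : ℝ, 0 < C ∧ ∃ ε₀ : ℝ, 0 < ε₀ ∧ ∀ ε ∈ Set.Ioo (0 : ℝ) ε₀,
      |sInf { v : ℝ | ∃ ω₁ ω₂ : ℝ,
            ω₂ ^ 2 * (1 - ρ ^ 2 * (1 - cRate ε) * cRate ε) ≤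
              (1 - ω₁ ^ 2 - 2 * ω₁ * ω₂ * ρ * Real.sqrt (cRate ε)) * cRate ε ∧
            ω₁ + Real.sqrt (cRate ε) * ρ * ω₂ = ρ ∧
            v = 2 * σ ^ 2 - 2 * ω₁ * ρ * σ ^ 2 * Real.sqrt (cRate ε) - 2 * ω₂ * σ ^ 2 }
          - 2 * σ ^ 2 * (1 - (ρ ^ 2 + Real.sqrt (1 - ρ ^ 2)) * Real.sqrt (2 * ε * Real.log 2))|
        ≤ C * ε := by
  obtain ⟨hρ₀, hρ₁⟩ := hρ
  have hρ_sq : ρ ^ 2 ≤ 1 := pow_le_one₀ hρ₀.le hρ₁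
  refine ⟨12 * σ ^ 2, by positivity, 1 / 2, by norm_num, fun ε ⟨hε₀, hε₁⟩ => ?_⟩
  have hlog₀ : 0 < log 2 := log_pos one_lt_two
  have hlog₁ : log 2 < 1 := by linarith [log_two_lt_d9]
  set t := 2 * ε * log 2
  have ht₀ : 0 < t := by positivity
  have ht_le : t ≤ 2 * ε := by nlinarith
  have hc := one_sub_exp_neg_mem_Icc ht₀.le (by nlinarith)
  have hc₀ : 0 ≤ 1 - exp (-t) := by nlinarith [hc.1]
  have hc₁ : ρ ^ 2 * (1 - exp (-t)) < 1 := by nlinarith [exp_pos (-t)]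
  rw [cRate_eq, (isLeast_distortion σ ρ _ hc₀ hρ_sq hc₁).csInf_eq]
  calc _ ≤ 6 * σ ^ 2 * t := abs_distortion_sub_expansion_le σ ρ _ t hρ_sq hc₀ hc (by nlinarith)
    _ ≤ 12 * σ ^ 2 * ε := by nlinarith [sq_nonneg σ]
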